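/- arXiv:1401.0193 — 6 statements merged into one kernel-verified Lean document; each statement's English description precedes it below -/
import Mathlib

section
/- For all vectors x and y in R^n, (1/2)·|x−y|^3 ≤ (|x|x − |y|y)·(x−y), where · on the right denotes the Euclidean inner product. -/
open RealInnerProductSpace

theorem half_norm_sub_cube_le_inner (n : ℕ) (x y : EuclideanSpace ℝ (Fin n)) :
    (1 / 2) * ‖x - y‖ ^ 3 ≤ ⟪‖x‖ • x - ‖y‖ • y, x - y⟫ := by
  have hc : ‖x - y‖ ≤ ‖x‖ + ‖y‖ := norm_sub_le x y
  have hc0 : (0:ℝ) ≤ ‖x - y‖ := norm_nonneg _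
  have ha : (0:ℝ) ≤ ‖x‖ := norm_nonneg _
  have hb : (0:ℝ) ≤ ‖y‖ := norm_nonneg _
  have hsq : ‖x - y‖ ^ 2 = ‖x‖ ^ 2 - 2 * ⟪x, y⟫ + ‖y‖ ^ 2 := norm_sub_sq_real x y
  have hexp : ⟪‖x‖ • x - ‖y‖ • y, x - y⟫
      = ‖x‖ ^ 3 + ‖y‖ ^ 3 - (‖x‖ + ‖y‖) * ⟪x, y⟫ := by
    simp only [inner_sub_left, inner_sub_right, real_inner_smul_left,
      real_inner_self_eq_norm_sq, real_inner_comm y x]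
    ring
  rw [hexp]
  nlinarith [sq_nonneg (‖x‖ - ‖y‖), mul_nonneg (mul_nonneg ha hb) hc0,
    sq_nonneg (‖x - y‖), mul_le_mul_of_nonneg_right hc (sq_nonneg (‖x - y‖)),
    mul_nonneg (add_nonneg ha hb) (sq_nonneg (‖x‖ - ‖y‖))]
end

section
/- For all vectors x and y in R^n, | |x|^{-1/2}x − |y|^{-1/2}y | ≤ √2 · |x−y|^{1/2}, where the map z ↦ |z|^{-1/2}z is extended by 0 at z = 0. -/
open RealInnerProductSpace

--  The map `z ↦ |z|^{-1/2} z`, extended by `0` at `z = 0`. 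
open Classical in
noncomputable def invSqrtNormSmul {n : ℕ} (z : EuclideanSpace ℝ (Fin n)) :
    EuclideanSpace ℝ (Fin n) :=
  if z = 0 then 0 else (‖z‖ ^ (-(1 / 2 : ℝ))) • z
private lemma key_ineq (a b d t s : ℝ) (hs : 0 < s) (hs2 : s ^ 2 = a * b)
    (hsab : 2 * s ≤ a + b) (hd : d ^ 2 = a ^ 2 + b ^ 2 - 2 * t) (hdn : 0 ≤ d)
    (hdd : d ≤ a + b) : a + b - 2 * t / s ≤ 2 * d := by
  have h3 : a + b - 2 * t / s = ((a + b) * s - 2 * t) / s := by field_simp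
  rw [h3, div_le_iff₀ hs]
  rcases le_or_gt d s with hc | hc
  · nlinarith [sq_nonneg (a - b), sq_nonneg (s - d), mul_nonneg hdn hs.le]
  · nlinarith [mul_nonneg (sub_nonneg.2 hdd) (by linarith : (0:ℝ) ≤ a + b + d - 2 * s),
      mul_nonneg hs.le (by linarith : (0:ℝ) ≤ a + b - 2 * s)]

private lemma norm_inv_smul {n : ℕ} (z : EuclideanSpace ℝ (Fin n)) (hz : z ≠ 0) :
    ‖invSqrtNormSmul z‖ = ‖z‖ ^ ((1:ℝ)/2) := by
  have hz' : (0:ℝ) < ‖z‖ := norm_pos_iff.2 hz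
  rw [invSqrtNormSmul, if_neg hz, norm_smul, Real.norm_eq_abs,
    abs_of_pos (Real.rpow_pos_of_pos hz' _)]
  calc ‖z‖ ^ (-(1/2:ℝ)) * ‖z‖ = ‖z‖ ^ (-(1/2:ℝ)) * ‖z‖ ^ (1:ℝ) := by rw [Real.rpow_one]
    _ = ‖z‖ ^ ((1:ℝ)/2) := by rw [← Real.rpow_add hz']; norm_num

private lemma aux (n : ℕ) (x y : EuclideanSpace ℝ (Fin n)) (hxy : ‖y‖ ≤ ‖x‖) :
    ‖invSqrtNormSmul x - invSqrtNormSmul y‖ ≤ Real.sqrt 2 * ‖x - y‖ ^ ((1 : ℝ) / 2) := by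
  have h2 : (1:ℝ) ≤ Real.sqrt 2 := by
    rw [show (1:ℝ) = Real.sqrt 1 by simp]
    exact Real.sqrt_le_sqrt (by norm_num)
  by_cases hy : y = 0
  · subst hy
    by_cases hx : x = 0
    · subst hx; simp [invSqrtNormSmul]
    · rw [show invSqrtNormSmul (0 : EuclideanSpace ℝ (Fin n)) = 0 by simp [invSqrtNormSmul],
        sub_zero, sub_zero, norm_inv_smul x hx]
      nlinarith [Real.rpow_nonneg (norm_nonneg x) ((1:ℝ)/2)]
  · have hb : (0:ℝ) < ‖y‖ := norm_pos_iff.2 hy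
    have ha : (0:ℝ) < ‖x‖ := lt_of_lt_of_le hb hxy
    have hx : x ≠ 0 := norm_pos_iff.1 ha
    set a := ‖x‖ with hadef
    set b := ‖y‖ with hbdef
    set d := ‖x - y‖ with hddef
    set t := ⟪x, y⟫ with htdef
    set s := Real.sqrt (a * b) with hsdef
    have hs : 0 < s := Real.sqrt_pos.2 (mul_pos ha hb)
    have hs2 : s ^ 2 = a * b := Real.sq_sqrt (mul_pos ha hb).le
    have hsab : 2 * s ≤ a + b := by
      nlinarith [sq_nonneg (a - b), hs2, hs.le]
    have hdn : (0:ℝ) ≤ d := norm_nonneg _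
    have hdsq : d ^ 2 = a ^ 2 + b ^ 2 - 2 * t := by
      rw [hddef, norm_sub_sq_real]; ring
    have hdd : d ≤ a + b := norm_sub_le x y
    -- inner product of the scaled vectors
    have hcoef : a ^ (-(1/2:ℝ)) * b ^ (-(1/2:ℝ)) = s⁻¹ := by
      rw [← Real.mul_rpow ha.le hb.le, Real.rpow_neg (mul_pos ha hb).le,
        hsdef, Real.sqrt_eq_rpow]
    have hN : ‖invSqrtNormSmul x - invSqrtNormSmul y‖ ^ 2 = a + b - 2 * t / s := by
      rw [invSqrtNormSmul, invSqrtNormSmul, if_neg hx, if_neg hy, norm_sub_sq_real,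
        norm_smul, norm_smul, real_inner_smul_left, real_inner_smul_right,
        Real.norm_eq_abs, Real.norm_eq_abs, abs_of_pos (Real.rpow_pos_of_pos ha _),
        abs_of_pos (Real.rpow_pos_of_pos hb _)]
      have e1 : (a ^ (-(1/2:ℝ)) * a) ^ 2 = a := by
        rw [mul_pow, ← Real.rpow_natCast (a ^ (-(1/2:ℝ))), ← Real.rpow_mul ha.le,
          ← Real.rpow_natCast a, ← Real.rpow_add ha]
        norm_num
      have e2 : (b ^ (-(1/2:ℝ)) * b) ^ 2 = b := by
        rw [mul_pow, ← Real.rpow_natCast (b ^ (-(1/2:ℝ))), ← Real.rpow_mul hb.le,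
          ← Real.rpow_natCast b, ← Real.rpow_add hb]
        norm_num
      rw [e1, e2]
      have : a ^ (-(1/2:ℝ)) * (b ^ (-(1/2:ℝ)) * t) = t / s := by
        rw [← mul_assoc, hcoef]; ring
      rw [this]; ring
    have hkey : ‖invSqrtNormSmul x - invSqrtNormSmul y‖ ^ 2 ≤ 2 * d := by
      rw [hN]; exact key_ineq a b d t s hs hs2 hsab hdsq hdn hdd
    calc ‖invSqrtNormSmul x - invSqrtNormSmul y‖
        = Real.sqrt (‖invSqrtNormSmul x - invSqrtNormSmul y‖ ^ 2) :=
          (Real.sqrt_sq (norm_nonneg _)).symm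
      _ ≤ Real.sqrt (2 * d) := Real.sqrt_le_sqrt hkey
      _ = Real.sqrt 2 * d ^ ((1:ℝ)/2) := by
          rw [Real.sqrt_mul (by norm_num) d, Real.sqrt_eq_rpow, Real.sqrt_eq_rpow]

theorem invSqrtNormSmul_sub_le (n : ℕ) (x y : EuclideanSpace ℝ (Fin n)) :
    ‖invSqrtNormSmul x - invSqrtNormSmul y‖ ≤ Real.sqrt 2 * ‖x - y‖ ^ ((1 : ℝ) / 2) := by
  rcases le_total ‖y‖ ‖x‖ with h | h
  · exact aux n x y h
  · have := aux n y x h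
    rwa [norm_sub_rev, norm_sub_rev y x] at this
end

section
/- For all vectors x and y in R^n, |x−y|^2 / (√|x| + √|y|) ≤ ( x/√|x| − y/√|y| ) · (x−y), where the map z ↦ z/√|z| is extended by 0 at z = 0, and the left-hand side is interpreted as 0 when x = y = 0. -/
open RealInnerProductSpace

lemma rpow_neg_half_eq {n : ℕ} (z : EuclideanSpace ℝ (Fin n)) :
    (‖z‖ : ℝ) ^ (-(1 / 2 : ℝ)) = (Real.sqrt ‖z‖)⁻¹ := by
  rw [Real.rpow_neg (norm_nonneg z), Real.sqrt_eq_rpow]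

lemma invSqrtNormSmul_zero {n : ℕ} :
    invSqrtNormSmul (0 : EuclideanSpace ℝ (Fin n)) = 0 := by
  simp [invSqrtNormSmul]

theorem sq_norm_sub_div_le_inner (n : ℕ) (x y : EuclideanSpace ℝ (Fin n)) :
    ‖x - y‖ ^ 2 / (Real.sqrt ‖x‖ + Real.sqrt ‖y‖) ≤
      ⟪invSqrtNormSmul x - invSqrtNormSmul y, x - y⟫ := by
  by_cases hx : x = 0
  · by_cases hy : y = 0
    · simp [hx, hy, invSqrtNormSmul]
    · subst hx
      have hb : (0:ℝ) < Real.sqrt ‖y‖ := Real.sqrt_pos.mpr (norm_pos_iff.mpr hy)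
      have hb2 : Real.sqrt ‖y‖ ^ 2 = ‖y‖ := Real.sq_sqrt (norm_nonneg y)
      rw [invSqrtNormSmul_zero, invSqrtNormSmul, if_neg hy, rpow_neg_half_eq,
        zero_sub, zero_sub, inner_neg_left, inner_neg_right, neg_neg,
        real_inner_smul_left, real_inner_self_eq_norm_sq,
        norm_zero, Real.sqrt_zero, zero_add, norm_neg]
      rw [div_le_iff₀ hb]
      have e : (Real.sqrt ‖y‖)⁻¹ * ‖y‖ ^ 2 * Real.sqrt ‖y‖ = ‖y‖ ^ 2 := by
        field_simp
      rw [e]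
  · by_cases hy : y = 0
    · subst hy
      have hb : (0:ℝ) < Real.sqrt ‖x‖ := Real.sqrt_pos.mpr (norm_pos_iff.mpr hx)
      have hb2 : Real.sqrt ‖x‖ ^ 2 = ‖x‖ := Real.sq_sqrt (norm_nonneg x)
      rw [invSqrtNormSmul_zero, invSqrtNormSmul, if_neg hx, rpow_neg_half_eq,
        sub_zero, sub_zero, real_inner_smul_left, real_inner_self_eq_norm_sq,
        norm_zero, Real.sqrt_zero, add_zero]
      rw [div_le_iff₀ hb]
      have e : (Real.sqrt ‖x‖)⁻¹ * ‖x‖ ^ 2 * Real.sqrt ‖x‖ = ‖x‖ ^ 2 := by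
        field_simp
      rw [e]
    · have ha : (0:ℝ) < Real.sqrt ‖x‖ := Real.sqrt_pos.mpr (norm_pos_iff.mpr hx)
      have hb : (0:ℝ) < Real.sqrt ‖y‖ := Real.sqrt_pos.mpr (norm_pos_iff.mpr hy)
      have ha2 : Real.sqrt ‖x‖ ^ 2 = ‖x‖ := Real.sq_sqrt (norm_nonneg x)
      have hb2 : Real.sqrt ‖y‖ ^ 2 = ‖y‖ := Real.sq_sqrt (norm_nonneg y)
      have hp : ⟪x, y⟫ ≤ ‖x‖ * ‖y‖ := real_inner_le_norm x y
      have hnorm : ‖x - y‖ ^ 2 = ‖x‖ ^ 2 - 2 * ⟪x, y⟫ + ‖y‖ ^ 2 :=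
        norm_sub_sq_real x y
      rw [invSqrtNormSmul, invSqrtNormSmul, if_neg hx, if_neg hy,
        rpow_neg_half_eq, rpow_neg_half_eq]
      rw [inner_sub_left, inner_sub_right, inner_sub_right,
        real_inner_smul_left, real_inner_smul_left, real_inner_smul_left,
        real_inner_smul_left, real_inner_self_eq_norm_sq,
        real_inner_self_eq_norm_sq]
      rw [div_le_iff₀ (by positivity)]
      set a := Real.sqrt ‖x‖
      set b := Real.sqrt ‖y‖
      set p := ⟪x, y⟫ with hpdef
      have hyx : ⟪y, x⟫ = p := (real_inner_comm y x).symm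
      rw [hyx]
      have hxa : ‖x‖ = a ^ 2 := ha2.symm
      have hyb : ‖y‖ = b ^ 2 := hb2.symm
      rw [hxa, hyb] at hnorm hp ⊢
      rw [hnorm]
      have e1 : a⁻¹ * (a ^ 2) ^ 2 = a ^ 3 := by field_simp
      have e2 : b⁻¹ * (b ^ 2) ^ 2 = b ^ 3 := by field_simp
      rw [e1, e2]
      have h2 : (a⁻¹ * p + b⁻¹ * p) * (a * b) = (a + b) * p := by
        field_simp; ring
      nlinarith [h2, mul_pos ha hb,
        mul_le_mul_of_nonneg_left hp (by positivity : (0:ℝ) ≤ a ^ 2 + b ^ 2),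
        sq_nonneg (a - b), sq_nonneg (a + b)]
end

section
/- Let X and Y be Hilbert spaces, a : Y × Y → R a form linear in its second variable, b : Y × X → R a bilinear form, with associated operators A : Y → Y' defined by ⟨A(v), w⟩ = a(v,w) and B : Y → X' defined by ⟨B(v), r⟩ = b(v,r). Suppose A is strictly monotone (i.e., ⟨A(u) − A(w), u − w⟩ ≥ 0 for all u, w with equality only if u = w) and B is surjective. Then for any f ∈ X' and g ∈ Y', the problem: find u ∈ Y, p ∈ X such that a(u,v) − b(v,p) = g(v) for all v ∈ Y and b(u,r) = f(r) for all r ∈ X, has at most one solution. -/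
/-!
Subtracting the two systems shows that `B(u - u') = 0` and that `A u - A u' = Bᵀ(p - p')`.
Testing the latter with `u - u'` gives `⟨A u - A u', u - u'⟩ = b(u - u', p - p') = 0`, so
`u = u'` by strict monotonicity. Then `b(·, p - p') = 0`, and surjectivity of `B` applied to the
Riesz functional of `p - p'` yields `‖p - p'‖² = 0`.
-/

open scoped InnerProductSpace

theorem eq_zero_of_forall_apply_eq_zero_of_surjective {X Y : Type*} [NormedAddCommGroup X]
    [InnerProductSpace ℝ X] (b : Y → X → ℝ) (hB_surj : ∀ φ : X →L[ℝ] ℝ, ∃ v : Y, ∀ r, b v r = φ r)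
    {q : X} (hq : ∀ v, b v q = 0) : q = 0 := by
  obtain ⟨v, hv⟩ := hB_surj (innerSL ℝ q)
  have hqq : ⟪q, q⟫_ℝ = 0 := by rw [← innerSL_apply_apply, ← hv, hq]
  exact inner_self_eq_zero.mp hqq

theorem mixed_problem_uniqueness_general
    (X Y : Type*) [NormedAddCommGroup X] [InnerProductSpace ℝ X]
    [NormedAddCommGroup Y] [InnerProductSpace ℝ Y]
    (a : Y → Y → ℝ) (b : Y → X → ℝ)
    (hb_lin₁ : ∀ r : X, IsLinearMap ℝ (fun v => b v r))
    (hb_lin₂ : ∀ v : Y, IsLinearMap ℝ (b v))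
    -- `A` strictly monotone: `⟨A(u) - A(w), u - w⟩ ≥ 0` with equality only if `u = w`
    (hA_strict : ∀ u w : Y, a u (u - w) - a w (u - w) = 0 → u = w)
    -- `B : Y → X'` surjective
    (hB_surj : ∀ φ : X →L[ℝ] ℝ, ∃ v : Y, ∀ r : X, b v r = φ r)
    (f : X →L[ℝ] ℝ) (g : Y →L[ℝ] ℝ) :
    ∀ u p u' p',
      ((∀ v : Y, a u v - b v p = g v) ∧ (∀ r : X, b u r = f r)) →
      ((∀ v : Y, a u' v - b v p' = g v) ∧ (∀ r : X, b u' r = f r)) →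
      u = u' ∧ p = p' := by
  rintro u p u' p' ⟨hg, hf⟩ ⟨hg', hf'⟩
  have hBt : ∀ v, b v (p - p') = a u v - a u' v := fun v => by
    rw [(hb_lin₂ v).map_sub]
    linarith [hg v, hg' v]
  have hB : ∀ r, b (u - u') r = 0 := fun r =>
    ((hb_lin₁ r).map_sub u u').trans (by rw [hf, hf', sub_self])
  have hu : u = u' := hA_strict u u' (by rw [← hBt, hB])
  subst hu
  exact ⟨rfl, sub_eq_zero.mp <|
    eq_zero_of_forall_apply_eq_zero_of_surjective b hB_surj fun v => by rw [hBt, sub_self]⟩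

/-- Uniqueness for the abstract mixed problem: if `A` is strictly monotone and
`B` is surjective onto the dual, then the mixed problem has at most one solution. -/
theorem mixed_problem_uniqueness
    (X Y : Type*) [NormedAddCommGroup X] [InnerProductSpace ℝ X] [CompleteSpace X]
    [NormedAddCommGroup Y] [InnerProductSpace ℝ Y] [CompleteSpace Y]
    (a : Y → Y → ℝ) (b : Y → X → ℝ)
    (ha_lin : ∀ u : Y, IsLinearMap ℝ (a u))
    (hb_lin₁ : ∀ r : X, IsLinearMap ℝ (fun v => b v r))
    (hb_lin₂ : ∀ v : Y, IsLinearMap ℝ (b v))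
    -- `A` strictly monotone: `⟨A(u) - A(w), u - w⟩ ≥ 0` with equality only if `u = w`
    (hA_mono : ∀ u w : Y, 0 ≤ a u (u - w) - a w (u - w))
    (hA_strict : ∀ u w : Y, a u (u - w) - a w (u - w) = 0 → u = w)
    -- `B : Y → X'` surjective
    (hB_surj : ∀ φ : X →L[ℝ] ℝ, ∃ v : Y, ∀ r : X, b v r = φ r)
    (f : X →L[ℝ] ℝ) (g : Y →L[ℝ] ℝ) :
    ∀ u p u' p',
      ((∀ v : Y, a u v - b v p = g v) ∧ (∀ r : X, b u r = f r)) →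
      ((∀ v : Y, a u' v - b v p' = g v) ∧ (∀ r : X, b u' r = f r)) →
      u = u' ∧ p = p' :=
  mixed_problem_uniqueness_general X Y a b hb_lin₁ hb_lin₂ hA_strict hB_surj f g
end

section
/- Let β > 0 be a constant and let G : (L^3(O))^n → (L^{3/2}(O))^n be defined by G(u) = β|u|u (pointwise, with |·| the Euclidean norm on R^n). Then G is strictly monotone: for u, w ∈ (L^3(O))^n, ∫_O β(|u|u − |w|w)·(u−w) dx ≥ (β/2)‖u − w‖³_{L^3(O)} ≥ 0, with equality only if u = w in L^3. -/
/-!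
With `a = ‖x‖`, `b = ‖y‖` one has the identity
`⟪a • x - b • y, x - y⟫ = (a + b) / 2 * (‖x - y‖ ^ 2 + (a - b) ^ 2)`, which together with
`‖x - y‖ ≤ a + b` gives the pointwise bound `‖x - y‖ ^ 3 / 2 ≤ ⟪a • x - b • y, x - y⟫`.
Integrating it turns the left side into `‖u - w‖³_{L³} / 2`, so a vanishing integral forces
`‖u - w‖_{L³} = 0`. The integrand is dominated by `(‖u‖ + ‖w‖) ^ 3`, which is integrable.
-/

open MeasureTheory RealInnerProductSpace
open scoped ENNReal

section Pointwise

variable {E : Type*} [NormedAddCommGroup E] [InnerProductSpace ℝ E]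

theorem inner_norm_smul_sub_norm_smul_sub_eq (x y : E) :
    ⟪‖x‖ • x - ‖y‖ • y, x - y⟫ = (‖x‖ + ‖y‖) / 2 * (‖x - y‖ ^ 2 + (‖x‖ - ‖y‖) ^ 2) := by
  rw [norm_sub_sq_real]
  simp only [inner_sub_left, inner_sub_right, inner_smul_left, real_inner_self_eq_norm_sq,
    real_inner_comm x y, RCLike.conj_to_real]
  ring

theorem half_mul_norm_sub_pow_three_le_inner_norm_smul_sub (x y : E) :
    1 / 2 * ‖x - y‖ ^ 3 ≤ ⟪‖x‖ • x - ‖y‖ • y, x - y⟫ := by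
  rw [inner_norm_smul_sub_norm_smul_sub_eq]
  calc 1 / 2 * ‖x - y‖ ^ 3 = ‖x - y‖ / 2 * ‖x - y‖ ^ 2 := by ring
    _ ≤ (‖x‖ + ‖y‖) / 2 * (‖x - y‖ ^ 2 + (‖x‖ - ‖y‖) ^ 2) := by
      gcongr
      · exact norm_sub_le x y
      · exact le_add_of_nonneg_right (sq_nonneg _)

theorem abs_inner_norm_smul_sub_norm_smul_sub_le (x y : E) :
    |⟪‖x‖ • x - ‖y‖ • y, x - y⟫| ≤ (‖x‖ + ‖y‖) ^ 3 :=
  calc |⟪‖x‖ • x - ‖y‖ • y, x - y⟫| ≤ ‖‖x‖ • x - ‖y‖ • y‖ * ‖x - y‖ := abs_real_inner_le_norm _ _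
    _ ≤ (‖x‖ ^ 2 + ‖y‖ ^ 2) * (‖x‖ + ‖y‖) := by
      gcongr
      · refine (norm_sub_le _ _).trans_eq ?_
        simp only [norm_smul, norm_norm, sq]
      · exact norm_sub_le x y
    _ ≤ (‖x‖ + ‖y‖) ^ 3 := by
      nlinarith [mul_nonneg (mul_nonneg (norm_nonneg x) (norm_nonneg y))
        (add_nonneg (norm_nonneg x) (norm_nonneg y))]

end Pointwise

section Integral

variable {α E : Type*} [MeasurableSpace α] {μ : Measure α}
  [NormedAddCommGroup E] [InnerProductSpace ℝ E]

theorem toReal_eLpNorm_pow_eq_integral_norm_pow {F : Type*} [NormedAddCommGroup F]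
    {f : α → F} (hf : AEStronglyMeasurable f μ) {p : ℕ} (hp : p ≠ 0) :
    (eLpNorm f p μ).toReal ^ p = ∫ x, ‖f x‖ ^ p ∂μ := by
  have hp' : (p : ℝ) ≠ 0 := Nat.cast_ne_zero.mpr hp
  have := lpNorm_nnreal_eq_integral_norm_rpow (p := (p : NNReal)) (by exact_mod_cast hp) hf
  rw [toReal_eLpNorm hf]
  simp only [ENNReal.coe_natCast, NNReal.coe_natCast, Real.rpow_natCast] at this
  rw [this, ← Real.rpow_natCast, ← Real.rpow_mul (integral_nonneg fun _ => by positivity),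
    inv_mul_cancel₀ hp', Real.rpow_one]

theorem integrable_inner_norm_smul_sub_norm_smul_sub {u w : α → E}
    (hu : MemLp u 3 μ) (hw : MemLp w 3 μ) :
    Integrable (fun x => ⟪‖u x‖ • u x - ‖w x‖ • w x, u x - w x⟫) μ := by
  have hum := hu.aestronglyMeasurable
  have hwm := hw.aestronglyMeasurable
  have hbound : Integrable (fun x => ‖‖u x‖ + ‖w x‖‖ ^ (3 : ℝ)) μ :=
    (hu.norm.add hw.norm).integrable_norm_rpow (by norm_num) (by norm_num)
  refine hbound.mono' (((hum.norm.smul hum).sub (hwm.norm.smul hwm)).inner (hum.sub hwm)) ?_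
  refine .of_forall fun x => ?_
  rw [Real.norm_eq_abs, Real.norm_of_nonneg (by positivity), Real.rpow_ofNat]
  exact abs_inner_norm_smul_sub_norm_smul_sub_le (u x) (w x)

theorem half_mul_toReal_eLpNorm_sub_pow_three_le_integral_inner {u w : α → E}
    (hu : MemLp u 3 μ) (hw : MemLp w 3 μ) :
    1 / 2 * (eLpNorm (u - w) 3 μ).toReal ^ 3 ≤
      ∫ x, ⟪‖u x‖ • u x - ‖w x‖ • w x, u x - w x⟫ ∂μ := by
  have huw := hu.sub hw
  have hnorm := toReal_eLpNorm_pow_eq_integral_norm_pow huw.aestronglyMeasurable three_ne_zero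
  rw [Nat.cast_ofNat] at hnorm
  rw [hnorm, ← integral_const_mul]
  refine integral_mono ?_ (integrable_inner_norm_smul_sub_norm_smul_sub hu hw)
    fun x => half_mul_norm_sub_pow_three_le_inner_norm_smul_sub (u x) (w x)
  exact (huw.integrable_norm_pow three_ne_zero).const_mul _

theorem MemLp.ae_eq_of_toReal_eLpNorm_sub_eq_zero {F : Type*} [NormedAddCommGroup F]
    {p : ℝ≥0∞} {u w : α → F} (hu : MemLp u p μ) (hw : MemLp w p μ) (hp : p ≠ 0)
    (h : (eLpNorm (u - w) p μ).toReal = 0) : u =ᵐ[μ] w := by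
  have huw := hu.sub hw
  rw [ENNReal.toReal_eq_zero_iff, or_iff_left huw.eLpNorm_ne_top,
    eLpNorm_eq_zero_iff huw.aestronglyMeasurable hp] at h
  filter_upwards [h] with x hx
  exact sub_eq_zero.mp hx

end Integral

theorem betaNormSmul_strictly_monotone_general
    (d n : ℕ) (O : Set (EuclideanSpace ℝ (Fin d)))
    (β : ℝ) (hβ : 0 < β)
    (u w : EuclideanSpace ℝ (Fin d) → EuclideanSpace ℝ (Fin n))
    (hu : MemLp u 3 (volume.restrict O)) (hw : MemLp w 3 (volume.restrict O)) :
    0 ≤ (β / 2) * (eLpNorm (u - w) 3 (volume.restrict O)).toReal ^ 3 ∧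
    (β / 2) * (eLpNorm (u - w) 3 (volume.restrict O)).toReal ^ 3 ≤
      ∫ x, β * ⟪‖u x‖ • u x - ‖w x‖ • w x, u x - w x⟫ ∂(volume.restrict O) ∧
    ((∫ x, β * ⟪‖u x‖ • u x - ‖w x‖ • w x, u x - w x⟫ ∂(volume.restrict O)) = 0 →
      u =ᵐ[volume.restrict O] w) := by
  have hle := half_mul_toReal_eLpNorm_sub_pow_three_le_integral_inner hu hw
  rw [integral_const_mul]
  refine ⟨by positivity, ?_, fun h0 => ?_⟩
  · calc β / 2 * (eLpNorm (u - w) 3 (volume.restrict O)).toReal ^ 3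
        = β * (1 / 2 * (eLpNorm (u - w) 3 (volume.restrict O)).toReal ^ 3) := by ring
      _ ≤ _ := by gcongr
  · have hint := (mul_eq_zero.mp h0).resolve_left hβ.ne'
    refine MemLp.ae_eq_of_toReal_eLpNorm_sub_eq_zero hu hw three_ne_zero ?_
    exact (pow_eq_zero_iff three_ne_zero).mp (le_antisymm (by linarith) (by positivity))

/-- The map `G(u) = β|u|u` is strictly monotone from `(L³(O))ⁿ` to `(L^{3/2}(O))ⁿ`:
`∫ β(|u|u − |w|w)·(u−w) ≥ (β/2)‖u−w‖³_{L³} ≥ 0`, with equality only if `u = w` a.e. -/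
theorem betaNormSmul_strictly_monotone
    (d n : ℕ) (O : Set (EuclideanSpace ℝ (Fin d)))
    (hOm : MeasurableSet O) (hObdd : Bornology.IsBounded O)
    (β : ℝ) (hβ : 0 < β)
    (u w : EuclideanSpace ℝ (Fin d) → EuclideanSpace ℝ (Fin n))
    (hu : MemLp u 3 (volume.restrict O)) (hw : MemLp w 3 (volume.restrict O)) :
    0 ≤ (β / 2) * (eLpNorm (u - w) 3 (volume.restrict O)).toReal ^ 3 ∧
    (β / 2) * (eLpNorm (u - w) 3 (volume.restrict O)).toReal ^ 3 ≤
      ∫ x, β * ⟪‖u x‖ • u x - ‖w x‖ • w x, u x - w x⟫ ∂(volume.restrict O) ∧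
    ((∫ x, β * ⟪‖u x‖ • u x - ‖w x‖ • w x, u x - w x⟫ ∂(volume.restrict O)) = 0 →
      u =ᵐ[volume.restrict O] w) :=
  betaNormSmul_strictly_monotone_general d n O β hβ u w hu hw
end

section
/- Let O ⊂ R^d be a bounded measurable set, α : O → R^{d×d} measurable symmetric with ᾱ|x|² ≥ x·α(y)x ≥ α̲|x|² for constants 0 < α̲ ≤ ᾱ and all y ∈ O, x ∈ R^d, and β > 0 a constant. Then the map A_β : (L^3(O))^d → (L^{3/2}(O))^d defined pointwise by A_β(u) = (α + β|u|)u is strictly monotone: ∫_O (A_β(u) − A_β(w))·(u−w) dx ≥ α̲‖u−w‖²_{L^2} + (β/2)‖u−w‖³_{L^3}, with equality zero only if u = w. -/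
/-!
Expanding the integrand, `(A_β(u) - A_β(w))·(u - w) = (u - w)·α(u - w) + β (|u|u - |w|w)·(u - w)`.
The first term is at least `α̲|u - w|²` by ellipticity, the second at least `(β/2)|u - w|³` by
the pointwise inequality `|a - b|³ ≤ 2 (|a|a - |b|b)·(a - b)`; integrating gives the estimate.
As `β > 0`, a vanishing integral forces `‖u - w‖_{L³} = 0`.
-/

open MeasureTheory RealInnerProductSpace
open scoped ENNReal

section Pointwise

variable {E : Type*} [NormedAddCommGroup E] [InnerProductSpace ℝ E]

theorem half_mul_norm_sub_pow_three_le_inner (a b : E) :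
    1 / 2 * ‖a - b‖ ^ 3 ≤ ⟪‖a‖ • a - ‖b‖ • b, a - b⟫ := by
  have h_inner : ⟪‖a‖ • a - ‖b‖ • b, a - b⟫ = ‖a‖ ^ 3 + ‖b‖ ^ 3 - (‖a‖ + ‖b‖) * ⟪a, b⟫ := by
    simp only [inner_sub_left, inner_sub_right, real_inner_smul_left,
      real_inner_self_eq_norm_sq, real_inner_comm b a]
    ring
  have h_ab : ⟪a, b⟫ = (‖a‖ ^ 2 + ‖b‖ ^ 2 - ‖a - b‖ ^ 2) / 2 := by
    rw [norm_sub_sq_real]; ring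
  have h_tri : ‖a - b‖ ≤ ‖a‖ + ‖b‖ := norm_sub_le a b
  -- the difference is `((‖a‖ - ‖b‖)² (‖a‖ + ‖b‖) + (‖a‖ + ‖b‖ - ‖a - b‖) ‖a - b‖²) / 2`
  rw [h_inner, h_ab]
  nlinarith [mul_nonneg (sub_nonneg.2 h_tri) (sq_nonneg ‖a - b‖),
    mul_nonneg (sq_nonneg (‖a‖ - ‖b‖)) (add_nonneg (norm_nonneg a) (norm_nonneg b))]

theorem inner_norm_smul_sub_le (a b : E) :
    ⟪‖a‖ • a - ‖b‖ • b, a - b⟫ ≤ (‖a‖ + ‖b‖) ^ 3 := by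
  have ha := norm_nonneg a
  have hb := norm_nonneg b
  calc ⟪‖a‖ • a - ‖b‖ • b, a - b⟫ ≤ ‖‖a‖ • a - ‖b‖ • b‖ * ‖a - b‖ := real_inner_le_norm _ _
    _ ≤ (‖a‖ ^ 2 + ‖b‖ ^ 2) * (‖a‖ + ‖b‖) := by
      gcongr
      · calc ‖‖a‖ • a - ‖b‖ • b‖ ≤ ‖‖a‖ • a‖ + ‖‖b‖ • b‖ := norm_sub_le _ _
          _ = ‖a‖ ^ 2 + ‖b‖ ^ 2 := by simp only [norm_smul, norm_norm, sq]
      · exact norm_sub_le a b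
    _ ≤ (‖a‖ + ‖b‖) ^ 3 := by nlinarith [mul_nonneg ha hb]

theorem inner_forchheimer_sub (L : E →L[ℝ] E) (β : ℝ) (a b : E) :
    ⟪(L a + β • (‖a‖ • a)) - (L b + β • (‖b‖ • b)), a - b⟫ =
      ⟪a - b, L (a - b)⟫ + β * ⟪‖a‖ • a - ‖b‖ • b, a - b⟫ := by
  have h : (L a + β • (‖a‖ • a)) - (L b + β • (‖b‖ • b)) =
      L (a - b) + β • (‖a‖ • a - ‖b‖ • b) := by
    rw [map_sub]; module
  rw [h, inner_add_left, real_inner_smul_left, real_inner_comm (a - b)]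

variable {L : E →L[ℝ] E} {c C β : ℝ}

theorem le_inner_forchheimer_sub (hβ : 0 ≤ β) (hlow : ∀ v, c * ‖v‖ ^ 2 ≤ ⟪v, L v⟫) (a b : E) :
    c * ‖a - b‖ ^ 2 + β / 2 * ‖a - b‖ ^ 3 ≤
      ⟪(L a + β • (‖a‖ • a)) - (L b + β • (‖b‖ • b)), a - b⟫ := by
  rw [inner_forchheimer_sub]
  have := mul_le_mul_of_nonneg_left (half_mul_norm_sub_pow_three_le_inner a b) hβ
  linarith [hlow (a - b)]

theorem inner_forchheimer_sub_le (hβ : 0 ≤ β) (hhigh : ∀ v, ⟪v, L v⟫ ≤ C * ‖v‖ ^ 2) (a b : E) :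
    ⟪(L a + β • (‖a‖ • a)) - (L b + β • (‖b‖ • b)), a - b⟫ ≤
      C * ‖a - b‖ ^ 2 + β * (‖a‖ + ‖b‖) ^ 3 := by
  rw [inner_forchheimer_sub]
  have := mul_le_mul_of_nonneg_left (inner_norm_smul_sub_le a b) hβ
  linarith [hhigh (a - b)]

end Pointwise

section Integral

variable {X E : Type*} [MeasurableSpace X] {μ : Measure X}
  [NormedAddCommGroup E] [InnerProductSpace ℝ E]

theorem toReal_eLpNorm_pow_eq_integral {F : Type*} [NormedAddCommGroup F] {f : X → F} {n : ℕ}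
    (hn : n ≠ 0) (hf : AEStronglyMeasurable f μ) :
    (eLpNorm f n μ).toReal ^ n = ∫ x, ‖f x‖ ^ n ∂μ := by
  rw [toReal_eLpNorm hf, lpNorm_eq_integral_norm_rpow_toReal (by simpa) (by simp) hf]
  simp only [ENNReal.toReal_natCast, Real.rpow_natCast]
  exact Real.rpow_inv_natCast_pow (integral_nonneg fun x => by positivity) hn

def darcyForchheimer (α : X → E →L[ℝ] E) (β : ℝ) (u : X → E) : X → E :=
  fun x => α x (u x) + β • (‖u x‖ • u x)

variable {α : X → E →L[ℝ] E} {c C β : ℝ} {u w : X → E}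

theorem aestronglyMeasurable_darcyForchheimer (hα : AEStronglyMeasurable α μ)
    (hu : AEStronglyMeasurable u μ) : AEStronglyMeasurable (darcyForchheimer α β u) μ :=
  (isBoundedBilinearMap_apply.continuous.comp_aestronglyMeasurable (hα.prodMk hu)).add
    ((hu.norm.smul hu).const_smul β)

theorem ae_le_inner_darcyForchheimer_sub (hβ : 0 ≤ β)
    (hlow : ∀ᵐ x ∂μ, ∀ v, c * ‖v‖ ^ 2 ≤ ⟪v, α x v⟫) :
    ∀ᵐ x ∂μ, c * ‖u x - w x‖ ^ 2 + β / 2 * ‖u x - w x‖ ^ 3 ≤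
      ⟪darcyForchheimer α β u x - darcyForchheimer α β w x, u x - w x⟫ :=
  hlow.mono fun x hx => le_inner_forchheimer_sub hβ hx (u x) (w x)

theorem ae_inner_darcyForchheimer_sub_le (hβ : 0 ≤ β)
    (hhigh : ∀ᵐ x ∂μ, ∀ v, ⟪v, α x v⟫ ≤ C * ‖v‖ ^ 2) :
    ∀ᵐ x ∂μ, ⟪darcyForchheimer α β u x - darcyForchheimer α β w x, u x - w x⟫ ≤
      C * ‖u x - w x‖ ^ 2 + β * (‖u x‖ + ‖w x‖) ^ 3 :=
  hhigh.mono fun x hx => inner_forchheimer_sub_le hβ hx (u x) (w x)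

variable [IsFiniteMeasure μ]

theorem integrable_inner_darcyForchheimer_sub (hα : AEStronglyMeasurable α μ)
    (hc : 0 ≤ c) (hβ : 0 ≤ β) (hlow : ∀ᵐ x ∂μ, ∀ v, c * ‖v‖ ^ 2 ≤ ⟪v, α x v⟫)
    (hhigh : ∀ᵐ x ∂μ, ∀ v, ⟪v, α x v⟫ ≤ C * ‖v‖ ^ 2) (hu : MemLp u 3 μ) (hw : MemLp w 3 μ) :
    Integrable (fun x => ⟪darcyForchheimer α β u x - darcyForchheimer α β w x, u x - w x⟫) μ := by
  have h_meas := ((aestronglyMeasurable_darcyForchheimer (β := β) hα hu.1).sub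
    (aestronglyMeasurable_darcyForchheimer (β := β) hα hw.1)).inner (𝕜 := ℝ) (hu.1.sub hw.1)
  have h_dom : Integrable (fun x => C * ‖u x - w x‖ ^ 2 + β * (‖u x‖ + ‖w x‖) ^ 3) μ := by
    refine (((hu.sub hw).mono_exponent (by norm_num : (2 : ℝ≥0∞) ≤ 3)).integrable_norm_pow'
      |>.const_mul C).add ?_
    refine ((hu.norm.add hw.norm).integrable_norm_pow' (p := 3) |>.const_mul β).congr ?_
    refine .of_forall fun x => ?_
    simp only [Pi.add_apply, Real.norm_of_nonneg (by positivity : 0 ≤ ‖u x‖ + ‖w x‖)]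
  -- the integrand is nonnegative, so its upper bound dominates it
  refine h_dom.mono' h_meas ?_
  filter_upwards [ae_le_inner_darcyForchheimer_sub hβ hlow,
    ae_inner_darcyForchheimer_sub_le hβ hhigh] with x h_lower h_upper
  rwa [Real.norm_of_nonneg (h_lower.trans' (by positivity))]

theorem le_integral_inner_darcyForchheimer_sub (hα : AEStronglyMeasurable α μ)
    (hc : 0 ≤ c) (hβ : 0 ≤ β) (hlow : ∀ᵐ x ∂μ, ∀ v, c * ‖v‖ ^ 2 ≤ ⟪v, α x v⟫)
    (hhigh : ∀ᵐ x ∂μ, ∀ v, ⟪v, α x v⟫ ≤ C * ‖v‖ ^ 2) (hu : MemLp u 3 μ) (hw : MemLp w 3 μ) :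
    c * (eLpNorm (u - w) 2 μ).toReal ^ 2 + β / 2 * (eLpNorm (u - w) 3 μ).toReal ^ 3 ≤
      ∫ x, ⟪darcyForchheimer α β u x - darcyForchheimer α β w x, u x - w x⟫ ∂μ := by
  have huw := hu.sub hw
  have h2 := (huw.mono_exponent (by norm_num : (2 : ℝ≥0∞) ≤ 3)).integrable_norm_pow' (p := 2)
  have h3 := huw.integrable_norm_pow' (p := 3)
  have h2_eq := toReal_eLpNorm_pow_eq_integral (n := 2) two_ne_zero huw.1
  have h3_eq := toReal_eLpNorm_pow_eq_integral (n := 3) three_ne_zero huw.1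
  rw [Nat.cast_ofNat] at h2_eq h3_eq
  rw [h2_eq, h3_eq, ← integral_const_mul,
    ← integral_const_mul, ← integral_add (h2.const_mul c) (h3.const_mul _)]
  exact integral_mono_ae ((h2.const_mul c).add (h3.const_mul _))
    (integrable_inner_darcyForchheimer_sub hα hc hβ hlow hhigh hu hw)
    (ae_le_inner_darcyForchheimer_sub hβ hlow)

end Integral

theorem darcyForchheimer_strictly_monotone_general
    (d : ℕ) (O : Set (EuclideanSpace ℝ (Fin d)))
    (hOm : MeasurableSet O) (hObdd : Bornology.IsBounded O)
    (α : EuclideanSpace ℝ (Fin d) → (EuclideanSpace ℝ (Fin d) →L[ℝ] EuclideanSpace ℝ (Fin d)))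
    (hαmeas : Measurable fun y => α y)
    (αlow αhigh : ℝ) (hαlow : 0 < αlow)
    (hell : ∀ y ∈ O, ∀ x : EuclideanSpace ℝ (Fin d),
      αlow * ‖x‖ ^ 2 ≤ ⟪x, α y x⟫ ∧ ⟪x, α y x⟫ ≤ αhigh * ‖x‖ ^ 2)
    (β : ℝ) (hβ : 0 < β)
    (u w : EuclideanSpace ℝ (Fin d) → EuclideanSpace ℝ (Fin d))
    (hu : MemLp u 3 (volume.restrict O)) (hw : MemLp w 3 (volume.restrict O)) :
    αlow * (eLpNorm (u - w) 2 (volume.restrict O)).toReal ^ 2 +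
        (β / 2) * (eLpNorm (u - w) 3 (volume.restrict O)).toReal ^ 3 ≤
      (∫ x, ⟪(α x (u x) + β • (‖u x‖ • u x)) - (α x (w x) + β • (‖w x‖ • w x)),
          u x - w x⟫ ∂(volume.restrict O)) ∧
    ((∫ x, ⟪(α x (u x) + β • (‖u x‖ • u x)) - (α x (w x) + β • (‖w x‖ • w x)),
          u x - w x⟫ ∂(volume.restrict O)) = 0 → u =ᵐ[volume.restrict O] w) := by
  set μ := volume.restrict O
  have : IsFiniteMeasure μ := isFiniteMeasure_restrict.2 hObdd.measure_lt_top.ne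
  have h_mono := le_integral_inner_darcyForchheimer_sub hαmeas.aestronglyMeasurable hαlow.le hβ.le
    (ae_restrict_of_forall_mem hOm fun y hy v => (hell y hy v).1)
    (ae_restrict_of_forall_mem hOm fun y hy v => (hell y hy v).2) hu hw
  refine ⟨h_mono, fun h_zero => ?_⟩
  have h_L3 : (eLpNorm (u - w) 3 μ).toReal ^ 3 = 0 := by
    have h_nonpos := h_mono.trans_eq h_zero
    have h_L2_term := mul_nonneg hαlow.le (sq_nonneg (eLpNorm (u - w) 2 μ).toReal)
    have h_L3_nonneg := pow_nonneg (eLpNorm (u - w) 3 μ).toReal_nonneg 3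
    nlinarith
  have h_sub := (eLpNorm_eq_zero_iff (hu.sub hw).1 three_ne_zero).1 <|
    ((ENNReal.toReal_eq_zero_iff _).1 (pow_eq_zero_iff three_ne_zero |>.1 h_L3)).resolve_right
      (hu.sub hw).eLpNorm_ne_top
  exact h_sub.mono fun x hx => sub_eq_zero.1 hx

/-- With a uniformly elliptic symmetric coefficient `α` and constant `β > 0`, the
Darcy–Forchheimer operator `A_β(u) = (α + β|u|)u` is strictly monotone:
`∫ (A_β(u) − A_β(w))·(u−w) ≥ α̲‖u−w‖²_{L²} + (β/2)‖u−w‖³_{L³}`,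
with the integral vanishing only if `u = w` a.e. -/
theorem darcyForchheimer_strictly_monotone
    (d : ℕ) (O : Set (EuclideanSpace ℝ (Fin d)))
    (hOm : MeasurableSet O) (hObdd : Bornology.IsBounded O)
    (α : EuclideanSpace ℝ (Fin d) → (EuclideanSpace ℝ (Fin d) →L[ℝ] EuclideanSpace ℝ (Fin d)))
    (hαmeas : Measurable fun y => α y)
    (hαsymm : ∀ y ∈ O, ∀ x x' : EuclideanSpace ℝ (Fin d), ⟪α y x, x'⟫ = ⟪x, α y x'⟫)
    (αlow αhigh : ℝ) (hαlow : 0 < αlow) (hαle : αlow ≤ αhigh)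
    (hell : ∀ y ∈ O, ∀ x : EuclideanSpace ℝ (Fin d),
      αlow * ‖x‖ ^ 2 ≤ ⟪x, α y x⟫ ∧ ⟪x, α y x⟫ ≤ αhigh * ‖x‖ ^ 2)
    (β : ℝ) (hβ : 0 < β)
    (u w : EuclideanSpace ℝ (Fin d) → EuclideanSpace ℝ (Fin d))
    (hu : MemLp u 3 (volume.restrict O)) (hw : MemLp w 3 (volume.restrict O)) :
    αlow * (eLpNorm (u - w) 2 (volume.restrict O)).toReal ^ 2 +
        (β / 2) * (eLpNorm (u - w) 3 (volume.restrict O)).toReal ^ 3 ≤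
      (∫ x, ⟪(α x (u x) + β • (‖u x‖ • u x)) - (α x (w x) + β • (‖w x‖ • w x)),
          u x - w x⟫ ∂(volume.restrict O)) ∧
    ((∫ x, ⟪(α x (u x) + β • (‖u x‖ • u x)) - (α x (w x) + β • (‖w x‖ • w x)),
          u x - w x⟫ ∂(volume.restrict O)) = 0 → u =ᵐ[volume.restrict O] w) :=
  darcyForchheimer_strictly_monotone_general d O hOm hObdd α hαmeas αlow αhigh hαlow hell β hβ u w
    hu hw
end
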